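/- For every guarded k-labeled incidence graph L ∈ GLI^k, the underlying incidence graph I_L belongs to IEHW_k, i.e., I_L has an entangled hypertree decomposition of width at most k. -/

import Mathlib

set_option autoImplicit false

noncomputable section

/-! ### Incidence graphs -/

/-- An incidence graph: finite sets of red nodes and blue nodes (realised as two
disjoint finite types), edges from blue nodes to red nodes, every red node adjacent
to at least one blue node. -/
structure IncGraph where
  R : Type
  B : Type
  [finR : Finite R]
  [finB : Finite B]
  E : B → R → Prop
  covered : ∀ v : R, ∃ e : B, E e v

attribute [instance] IncGraph.finR IncGraph.finB

/-- The neighbourhood of a blue node. -/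
def IncGraph.nbhd (I : IncGraph) (e : I.B) : Set I.R := {v | I.E e v}

/-- Homomorphisms between incidence graphs. -/
def IncHom (J I : IncGraph) : Type :=
  {h : (J.R → I.R) × (J.B → I.B) // ∀ e v, J.E e v → I.E (h.2 e) (h.1 v)}

/-- The number of homomorphisms between incidence graphs. -/
def homCount (J I : IncGraph) : ℕ := Nat.card (IncHom J I)

/-- Homomorphism indistinguishability over a class of incidence graphs. -/
def HomIndist (C : Set IncGraph) (I I' : IncGraph) : Prop :=
  ∀ J ∈ C, homCount J I = homCount J I'

/-- Isomorphism of incidence graphs. -/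
def IncIso (I I' : IncGraph) : Prop :=
  ∃ (πR : I.R ≃ I'.R) (πB : I.B ≃ I'.B), ∀ e v, I.E e v ↔ I'.E (πB e) (πR v)

/-! ### Hypergraphs -/

structure HGraph where
  V : Type
  Edge : Type
  [finV : Finite V]
  [finE : Finite Edge]
  f : Edge → Set V
  covered : ∀ v : V, ∃ e : Edge, v ∈ f e

attribute [instance] HGraph.finV HGraph.finE

/-- A hypergraph is simple if its incidence function is injective. -/
def HGraph.Simple (H : HGraph) : Prop := Function.Injective H.f

/-- The incidence graph of a hypergraph. -/
def HGraph.inc (H : HGraph) : IncGraph where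
  R := H.V
  B := H.Edge
  E := fun e v => v ∈ H.f e
  covered := H.covered

/-- Homomorphisms between hypergraphs. -/
def HypHom (F H : HGraph) : Type :=
  {h : (F.V → H.V) × (F.Edge → H.Edge) // ∀ e, H.f (h.2 e) = h.1 '' F.f e}

/-- The number of homomorphisms between hypergraphs. -/
def hhomCount (F H : HGraph) : ℕ := Nat.card (HypHom F H)

/-- Homomorphism indistinguishability over a class of hypergraphs. -/
def HypHomIndist (C : Set HGraph) (H H' : HGraph) : Prop :=
  ∀ F ∈ C, hhomCount F H = hhomCount F H'

/-! ### Hypertree decompositions -/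

/-- A complete generalised hypertree decomposition of an incidence graph. -/
structure GHD (I : IncGraph) where
  T : Type
  [finT : Finite T]
  tr : SimpleGraph T
  isTree : tr.IsTree
  Bag : T → Set I.R
  Cover : T → Set I.B
  complete : ∀ e : I.B, ∃ t, I.nbhd e ⊆ Bag t ∧ e ∈ Cover t
  connR : ∀ v : I.R, (tr.induce {t | v ∈ Bag t}).Connected
  covering : ∀ t, Bag t ⊆ ⋃ e ∈ Cover t, I.nbhd e

attribute [instance] GHD.finT

/-- The decomposition has width at most `k`. -/
def GHD.widthLe {I : IncGraph} (D : GHD I) (k : ℕ) : Prop :=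
  ∀ t, (D.Cover t).ncard ≤ k

/-- An entangled hypertree decomposition. -/
structure EHD (I : IncGraph) extends GHD I where
  precise : ∀ t, (⋃ e ∈ Cover t, I.nbhd e) = Bag t
  connB : ∀ e : I.B, (tr.induce {t | e ∈ Cover t}).Connected

/-- Incidence graphs of generalised hypertree width at most `k`. -/
def IGHW (k : ℕ) : Set IncGraph := {I | ∃ D : GHD I, D.widthLe k}

/-- Incidence graphs of entangled hypertree width at most `k`. -/
def IEHW (k : ℕ) : Set IncGraph := {I | ∃ D : EHD I, D.toGHD.widthLe k}

/-- Hypergraphs of generalised hypertree width at most `k`. -/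
def GHWclass (k : ℕ) : Set HGraph := {H | H.inc ∈ IGHW k}

/-- Simple hypergraphs of generalised hypertree width at most `k`. -/
def SGHWclass (k : ℕ) : Set HGraph := {H | H.Simple ∧ H.inc ∈ IGHW k}

/-- Adding `n` fresh blue nodes whose neighbourhood is exactly `s`. -/
def IncGraph.addBlue (J : IncGraph) (s : Set J.R) (n : ℕ) : IncGraph where
  R := J.R
  B := J.B ⊕ Fin n
  E := fun e v => Sum.elim (fun e₁ => J.E e₁ v) (fun _ => v ∈ s) e
  covered := fun v => by
    obtain ⟨e, he⟩ := J.covered v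
    exact ⟨Sum.inl e, he⟩

/-! ### Guard functions -/

/-- A guard function: a partial map from red-variable indices to `[k]`
with finite domain. -/
structure GuardF (k : ℕ) where
  f : ℕ → Option (Fin k)
  fin : {i | (f i).isSome}.Finite

namespace GuardF

variable {k : ℕ}

/-- The domain of a guard function. -/
def dom (g : GuardF k) : Finset ℕ := g.fin.toFinset

open Classical in
/-- The image of a guard function. -/
def img (g : GuardF k) : Finset (Fin k) :=
  Finset.univ.filter fun j => ∃ i, g.f i = some j

theorem mem_dom {g : GuardF k} {i : ℕ} : i ∈ g.dom ↔ (g.f i).isSome := by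
  simp [dom, Set.Finite.mem_toFinset]

theorem mem_img {g : GuardF k} {j : Fin k} : j ∈ g.img ↔ ∃ i, g.f i = some j := by
  classical
  simp [img]

/-- Union of two guard functions (the first takes precedence). -/
def union (g₁ g₂ : GuardF k) : GuardF k where
  f := fun i => (g₁.f i).or (g₂.f i)
  fin := by
    apply (g₁.fin.union g₂.fin).subset
    intro i hi
    simp only [Set.mem_setOf_eq, Option.isSome_or, Bool.or_eq_true] at hi
    exact hi

/-- Removing a set of indices from the domain of a guard function. -/
def remove (g : GuardF k) (s : Finset ℕ) : GuardF k where
  f := fun i => if i ∈ s then none else g.f i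
  fin := by
    apply g.fin.subset
    intro i hi
    simp only [Set.mem_setOf_eq] at hi ⊢
    by_cases h : i ∈ s
    · simp [h] at hi
    · simpa [h] using hi

/-- Two guard functions are compatible if they agree on the intersection
of their domains. -/
def Compatible (g₁ g₂ : GuardF k) : Prop :=
  ∀ i j₁ j₂, g₁.f i = some j₁ → g₂.f i = some j₂ → j₁ = j₂

/-- `f` is a transition for `g`. -/
def IsTransition (g f : GuardF k) : Prop :=
  f.dom.Nonempty ∧ (∀ i, (f.f i).isSome → (g.f i).isSome) ∧
    ∀ i j, g.f i = some j → j ∈ f.img → (f.f i).isSome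

/-- `g ⊆ g'` for guard functions. -/
def le (g g' : GuardF k) : Prop := ∀ i j, g.f i = some j → g'.f i = some j

end GuardF

/-! ### The logic GC^k -/

/-- Raw syntax of the two-sorted counting logic with guards. Quantifiers carry
the guard function used to guard the quantified formula. -/
inductive Fml (k : ℕ) : Type where
  | top : Fml k
  | E (j : Fin k) (i : ℕ) : Fml k
  | beq (j j' : Fin k) : Fml k
  | req (i i' : ℕ) : Fml k
  | not (ψ : Fml k) : Fml k
  | and (ψ₁ ψ₂ : Fml k) : Fml k
  | exR (n : ℕ) (s : Finset ℕ) (g : GuardF k) (ψ : Fml k) : Fml k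
  | exB (n : ℕ) (s : Finset (Fin k)) (g : GuardF k) (ψ : Fml k) : Fml k

/-- Indices of free red variables of a formula.  For the quantified formulas the
quantified body is `(α_g ∧ ψ)`. -/
def freeR {k : ℕ} : Fml k → Finset ℕ
  | .top => ∅
  | .E _ i => {i}
  | .beq _ _ => ∅
  | .req i i' => {i, i'}
  | .not ψ => freeR ψ
  | .and ψ₁ ψ₂ => freeR ψ₁ ∪ freeR ψ₂
  | .exR _ s g ψ => (g.dom ∪ freeR ψ) \ s
  | .exB _ _ g ψ => g.dom ∪ freeR ψ

/-- Indices of free blue variables of a formula. -/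
def freeB {k : ℕ} : Fml k → Finset (Fin k)
  | .top => ∅
  | .E j _ => {j}
  | .beq j j' => {j, j'}
  | .req _ _ => ∅
  | .not ψ => freeB ψ
  | .and ψ₁ ψ₂ => freeB ψ₁ ∪ freeB ψ₂
  | .exR _ _ g ψ => g.img ∪ freeB ψ
  | .exB _ s g ψ => (g.img ∪ freeB ψ) \ s

/-- Updating a red assignment on the variables in `s`. -/
def updR {R : Type} (βR : ℕ → R) (s : Finset ℕ) (a : ↥s → R) : ℕ → R :=
  fun i => if h : i ∈ s then a ⟨i, h⟩ else βR i

/-- Updating a blue assignment on the variables in `s`. -/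
def updB {k : ℕ} {B : Type} (βB : Fin k → B) (s : Finset (Fin k)) (a : ↥s → B) : Fin k → B :=
  fun j => if h : j ∈ s then a ⟨j, h⟩ else βB j

/-- Satisfaction of the guard formula `α_g` in an interpretation. -/
def GuardSat {k : ℕ} (I : IncGraph) (βB : Fin k → I.B) (βR : ℕ → I.R) (g : GuardF k) : Prop :=
  ∀ i j, g.f i = some j → I.E (βB j) (βR i)

/-- Satisfaction of a formula in an interpretation `(I, β)`. -/
def FmlSat {k : ℕ} (I : IncGraph) : Fml k → (Fin k → I.B) → (ℕ → I.R) → Prop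
  | Fml.top, _, _ => True
  | Fml.E j i, βB, βR => I.E (βB j) (βR i)
  | Fml.beq j j', βB, _ => βB j = βB j'
  | Fml.req i i', _, βR => βR i = βR i'
  | Fml.not ψ, βB, βR => ¬ FmlSat I ψ βB βR
  | Fml.and ψ₁ ψ₂, βB, βR => FmlSat I ψ₁ βB βR ∧ FmlSat I ψ₂ βB βR
  | Fml.exR n s g ψ, βB, βR =>
      n ≤ Nat.card {a : ↥s → I.R //
        GuardSat I βB (updR βR s a) g ∧ FmlSat I ψ βB (updR βR s a)}
  | Fml.exB n s g ψ, βB, βR =>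
      n ≤ Nat.card {a : ↥s → I.B //
        GuardSat I (updB βB s a) βR g ∧ FmlSat I ψ (updB βB s a) βR}

/-- The formulas of the logic `GC^k`. -/
inductive IsGC (k : ℕ) : Fml k → Prop
  | top : IsGC k Fml.top
  | E (j : Fin k) (i : ℕ) : IsGC k (Fml.E j i)
  | beq (j j' : Fin k) : IsGC k (Fml.beq j j')
  | req (i i' : ℕ) : IsGC k (Fml.req i i')
  | not {ψ : Fml k} : IsGC k ψ → IsGC k ψ.not
  | and {ψ₁ ψ₂ : Fml k} : IsGC k ψ₁ → IsGC k ψ₂ → IsGC k (ψ₁.and ψ₂)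
  | exR {ψ : Fml k} (n : ℕ) (s : Finset ℕ) (g : GuardF k) :
      IsGC k ψ → g.dom = freeR ψ → 1 ≤ n → s.Nonempty → s ⊆ g.dom →
      IsGC k (Fml.exR n s g ψ)
  | exB {ψ : Fml k} (n : ℕ) (s : Finset (Fin k)) (g : GuardF k) :
      IsGC k ψ → g.dom = freeR ψ → 1 ≤ n → s.Nonempty → s ⊆ g.img ∪ freeB ψ →
      IsGC k (Fml.exB n s g ψ)

/-- The normal form `NGC^k`: `NGC k g ψ` expresses that `(α_g ∧ ψ)` is a formula
of the fragment `NGC^k`. -/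
inductive NGC (k : ℕ) : GuardF k → Fml k → Prop
  | E {g : GuardF k} (j : Fin k) (i : ℕ) : g.dom = {i} → NGC k g (Fml.E j i)
  | beq {g : GuardF k} (j j' : Fin k) : g.dom = ∅ → NGC k g (Fml.beq j j')
  | req {g : GuardF k} (i i' : ℕ) : g.dom = {i, i'} → NGC k g (Fml.req i i')
  | not {g : GuardF k} {ψ : Fml k} : NGC k g ψ → NGC k g ψ.not
  | and {g₁ g₂ : GuardF k} {ψ₁ ψ₂ : Fml k} :
      NGC k g₁ ψ₁ → NGC k g₂ ψ₂ → GuardF.Compatible g₁ g₂ →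
      NGC k (g₁.union g₂) (ψ₁.and ψ₂)
  | exR {g : GuardF k} {ψ : Fml k} (n : ℕ) (s : Finset ℕ) :
      NGC k g ψ → 1 ≤ n → s.Nonempty → s ⊆ g.dom →
      NGC k (g.remove s) (Fml.exR n s g ψ)
  | exB {g g' : GuardF k} {ψ : Fml k} (n : ℕ) (s : Finset (Fin k)) :
      NGC k g ψ → 1 ≤ n → s.Nonempty → s ⊆ g.img ∪ freeB ψ →
      g'.dom = g.dom →
      (∀ i ∈ g.dom, ∃ j, g'.f i = some j ∧ (g.f i = some j ∨ j ∈ s ∨ j ∉ g.img)) →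
      NGC k g' (Fml.exB n s g ψ)

/-- Indistinguishability of two incidence graphs by sentences of `GC^k`. -/
def GCEquiv (k : ℕ) (I I' : IncGraph) : Prop :=
  ∀ φ : Fml k, IsGC k φ → freeR φ = ∅ → freeB φ = ∅ →
    ((∀ βB βR, FmlSat I φ βB βR) ↔ (∀ βB βR, FmlSat I' φ βB βR))

/-! ### k-labeled incidence graphs -/

/-- A `k`-labeled incidence graph. -/
structure KLI (k : ℕ) where
  I : IncGraph
  r : ℕ → Option I.R
  b : Fin k → Option I.B
  g : GuardF k
  fin_r : {i | (r i).isSome}.Finite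

namespace KLI

variable {k : ℕ}

/-- The set of red labels used. -/
def domR (L : KLI k) : Finset ℕ := L.fin_r.toFinset

/-- The set of blue labels used. -/
def domB (L : KLI k) : Finset (Fin k) := Finset.univ.filter fun j => (L.b j).isSome

/-- `L` has real guards with respect to the partial map `f`. -/
def realGuardsWrt (L : KLI k) (f : ℕ → Option (Fin k)) : Prop :=
  ∀ i j, f i = some j → ∃ v e, L.r i = some v ∧ L.b j = some e ∧ L.I.E e v

/-- `L` has real guards. -/
def realGuards (L : KLI k) : Prop := L.realGuardsWrt L.g.f

/-- Removing red labels. -/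
def removeR (L : KLI k) (X : Finset ℕ) : KLI k where
  I := L.I
  r := fun i => if i ∈ X then none else L.r i
  b := L.b
  g := L.g.remove X
  fin_r := by
    apply L.fin_r.subset
    intro i hi
    simp only [Set.mem_setOf_eq] at hi ⊢
    by_cases h : i ∈ X
    · simp [h] at hi
    · simpa [h] using hi

/-- Removing blue labels. -/
def removeB (L : KLI k) (X : Finset (Fin k)) : KLI k where
  I := L.I
  r := L.r
  b := fun j => if j ∈ X then none else L.b j
  g := L.g
  fin_r := L.fin_r

/-- Moving the red labels in `X` onto the nodes given by `a`. -/
def reseatR (L : KLI k) (X : Finset ℕ) (a : ↥X → L.I.R) : KLI k where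
  I := L.I
  r := fun i => if h : i ∈ X then some (a ⟨i, h⟩) else L.r i
  b := L.b
  g := L.g
  fin_r := by
    apply (L.fin_r.union X.finite_toSet).subset
    intro i hi
    simp only [Set.mem_setOf_eq] at hi
    by_cases h : i ∈ X
    · exact Or.inr (by simpa using h)
    · exact Or.inl (by simpa [h] using hi)

/-- Moving the blue labels in `X` onto the nodes given by `a`. -/
def reseatB (L : KLI k) (X : Finset (Fin k)) (a : ↥X → L.I.B) : KLI k where
  I := L.I
  r := L.r
  b := fun j => if h : j ∈ X then some (a ⟨j, h⟩) else L.b j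
  g := L.g
  fin_r := L.fin_r

/-- The identifications of red nodes when glueing. -/
def glueRelR (L₁ L₂ : KLI k) : (L₁.I.R ⊕ L₂.I.R) → (L₁.I.R ⊕ L₂.I.R) → Prop :=
  fun x y => ∃ i v₁ v₂, L₁.r i = some v₁ ∧ L₂.r i = some v₂ ∧ x = Sum.inl v₁ ∧ y = Sum.inr v₂

/-- The identifications of blue nodes when glueing. -/
def glueRelB (L₁ L₂ : KLI k) : (L₁.I.B ⊕ L₂.I.B) → (L₁.I.B ⊕ L₂.I.B) → Prop :=
  fun x y => ∃ j e₁ e₂, L₁.b j = some e₁ ∧ L₂.b j = some e₂ ∧ x = Sum.inl e₁ ∧ y = Sum.inr e₂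

/-- The incidence graph underlying the glueing of two labeled incidence graphs. -/
def glueIG (L₁ L₂ : KLI k) : IncGraph where
  R := Quot (glueRelR L₁ L₂)
  B := Quot (glueRelB L₁ L₂)
  finR := Finite.of_surjective (Quot.mk (glueRelR L₁ L₂))
    (fun q => Quot.inductionOn q fun a => ⟨a, rfl⟩)
  finB := Finite.of_surjective (Quot.mk (glueRelB L₁ L₂))
    (fun q => Quot.inductionOn q fun a => ⟨a, rfl⟩)
  E := fun e v =>
    (∃ e₁ v₁, L₁.I.E e₁ v₁ ∧ e = Quot.mk (glueRelB L₁ L₂) (Sum.inl e₁) ∧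
      v = Quot.mk (glueRelR L₁ L₂) (Sum.inl v₁)) ∨
    (∃ e₂ v₂, L₂.I.E e₂ v₂ ∧ e = Quot.mk (glueRelB L₁ L₂) (Sum.inr e₂) ∧
      v = Quot.mk (glueRelR L₁ L₂) (Sum.inr v₂))
  covered := by
    intro v
    induction v using Quot.ind with
    | _ x =>
      cases x with
      | inl v₁ =>
        obtain ⟨e₁, he⟩ := L₁.I.covered v₁
        exact ⟨Quot.mk (glueRelB L₁ L₂) (Sum.inl e₁), Or.inl ⟨e₁, v₁, he, rfl, rfl⟩⟩
      | inr v₂ =>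
        obtain ⟨e₂, he⟩ := L₂.I.covered v₂
        exact ⟨Quot.mk (glueRelB L₁ L₂) (Sum.inr e₂), Or.inr ⟨e₂, v₂, he, rfl, rfl⟩⟩

/-- Glueing two `k`-labeled incidence graphs. -/
def glue (L₁ L₂ : KLI k) : KLI k where
  I := glueIG L₁ L₂
  r := fun i =>
    match L₁.r i with
    | some v => some (Quot.mk (glueRelR L₁ L₂) (Sum.inl v))
    | none => (L₂.r i).map fun v => Quot.mk (glueRelR L₁ L₂) (Sum.inr v)
  b := fun j =>
    match L₁.b j with
    | some e => some (Quot.mk (glueRelB L₁ L₂) (Sum.inl e))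
    | none => (L₂.b j).map fun e => Quot.mk (glueRelB L₁ L₂) (Sum.inr e)
  g := L₁.g.union L₂.g
  fin_r := by
    apply (L₁.fin_r.union L₂.fin_r).subset
    intro i hi
    simp only [Set.mem_setOf_eq] at hi
    cases h₁ : L₁.r i with
    | some v => exact Or.inl (by simp [h₁])
    | none =>
      right
      rw [h₁] at hi
      show (L₂.r i).isSome = true
      revert hi
      cases L₂.r i <;> intro h <;> first | rfl | cases h | exact Bool.noConfusion h

/-- The `k`-labeled incidence graph `L^f` defined by a guard function `f`. -/
def guardKLI (f : GuardF k) : KLI k where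
  I := { R := {i : ℕ // i ∈ f.dom}
         B := {j : Fin k // j ∈ f.img}
         E := fun j i => f.f i.1 = some j.1
         covered := by
           rintro ⟨i, hi⟩
           have hs : (f.f i).isSome := GuardF.mem_dom.mp hi
           have hj : (f.f i).get hs ∈ f.img :=
             GuardF.mem_img.mpr ⟨i, (Option.some_get hs).symm⟩
           exact ⟨⟨(f.f i).get hs, hj⟩, (Option.some_get hs).symm⟩ }
  r := fun i => if h : i ∈ f.dom then some ⟨i, h⟩ else none
  b := fun j => if h : j ∈ f.img then some ⟨j, h⟩ else none
  g := f
  fin_r := by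
    apply f.dom.finite_toSet.subset
    intro i hi
    simp only [Set.mem_setOf_eq] at hi
    by_cases h : i ∈ f.dom
    · simpa using h
    · simp [h] at hi

/-- Applying a transition `f` to `L`. -/
def applyTransition (L : KLI k) (f : GuardF k) : KLI k :=
  (guardKLI f).glue (L.removeB (L.g.img ∩ f.img ∩ L.domB))

end KLI

/-- The class `GLI^k` of guarded `k`-labeled incidence graphs. -/
inductive GLI (k : ℕ) : KLI k → Prop
  | base (L : KLI k) :
      (∀ v : L.I.R, ∃ i, L.r i = some v) →
      (∀ e : L.I.B, ∃ j, L.b j = some e) →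
      (∀ i, (L.r i).isSome ↔ (L.g.f i).isSome) →
      L.realGuards → GLI k L
  | removeR (L : KLI k) (X : Finset ℕ) :
      GLI k L → (∀ i ∈ X, (L.r i).isSome) → GLI k (L.removeR X)
  | removeB (L : KLI k) (X : Finset (Fin k)) :
      GLI k L → (∀ j ∈ X, (L.b j).isSome ∧ j ∉ L.g.img) → GLI k (L.removeB X)
  | trans (L : KLI k) (f : GuardF k) :
      GLI k L → L.g.IsTransition f → GLI k (L.applyTransition f)
  | glue (L L' : KLI k) :
      GLI k L → GLI k L' → GuardF.Compatible L.g L'.g → GLI k (L.glue L')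

/-- Two `k`-labeled incidence graphs are compatible. -/
def KCompatible {k : ℕ} (L L' : KLI k) : Prop :=
  (∀ i, (L.r i).isSome ↔ (L'.r i).isSome) ∧
  (∀ j, (L.b j).isSome ↔ (L'.b j).isSome) ∧ L.g.f = L'.g.f

/-- Homomorphisms between `k`-labeled incidence graphs: they respect the labels
and ignore the guard functions. -/
def KHom {k : ℕ} (L L' : KLI k) : Type :=
  {h : (L.I.R → L'.I.R) × (L.I.B → L'.I.B) //
    (∀ e v, L.I.E e v → L'.I.E (h.2 e) (h.1 v)) ∧
    (∀ i v, L.r i = some v → L'.r i = some (h.1 v)) ∧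
    (∀ j e, L.b j = some e → L'.b j = some (h.2 e))}

/-- The number of homomorphisms between `k`-labeled incidence graphs. -/
def khom {k : ℕ} (L L' : KLI k) : ℕ := Nat.card (KHom L L')

/-! ### Quantum incidence graphs -/

/-- A formal linear combination of `k`-labeled incidence graphs, given as a list
of coefficient/component pairs. -/
abbrev QIG (k : ℕ) := List (ℝ × KLI k)

/-- `Q` is a `k`-labeled quantum incidence graph: it is a nonempty formal linear
combination of pairwise compatible `k`-labeled incidence graphs. -/
def IsQuantum {k : ℕ} (Q : QIG k) : Prop :=
  Q ≠ [] ∧ ∀ p ∈ Q, ∀ q ∈ Q, KCompatible p.2 q.2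

/-- Homomorphism count from a quantum incidence graph. -/
def qhom {k : ℕ} (Q : QIG k) (L : KLI k) : ℝ :=
  (Q.map fun p => p.1 * (khom p.2 L : ℝ)).sum

/-- Glueing of quantum incidence graphs. -/
def qglue {k : ℕ} (Q Q' : QIG k) : QIG k :=
  Q.flatMap fun p => Q'.map fun q => (p.1 * q.1, p.2.glue q.2)

/-- Componentwise removal of red labels. -/
def qremoveR {k : ℕ} (Q : QIG k) (X : Finset ℕ) : QIG k :=
  Q.map fun p => (p.1, p.2.removeR X)

/-- Componentwise removal of blue labels. -/
def qremoveB {k : ℕ} (Q : QIG k) (X : Finset (Fin k)) : QIG k :=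
  Q.map fun p => (p.1, p.2.removeB X)

/-- Componentwise application of a transition. -/
def qapplyTransition {k : ℕ} (Q : QIG k) (f : GuardF k) : QIG k :=
  Q.map fun p => (p.1, p.2.applyTransition f)

/-- Guarded quantum incidence graphs: all components belong to `GLI^k`. -/
def IsQGLI {k : ℕ} (Q : QIG k) : Prop := IsQuantum Q ∧ ∀ p ∈ Q, GLI k p.2

end

/-! Induction on `GLI^k`, carrying an entangled hypertree decomposition of width at most `k` with a
root whose cover contains every labelled blue node and whose bag contains every labelled red node;
bags are always the union of the neighbourhoods of the cover, so precise coverage is automatic.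
Removing labels keeps the decomposition. For a glueing `L₁ · L₂`, and so for a transition
`L^f · (L − X_B)` (`L^f` has a one-node decomposition, all its blue nodes being labelled), both
trees are hung below a new root covered by the labelled blue nodes of the glueing. Glueing only
merges labelled nodes, and these all meet at the new root, so connectedness survives. The guards
are what make the new bag contain the labelled red nodes: with real guards and `dom r = dom g`,
every labelled red node is adjacent to a labelled blue node. -/

lemma ncard_setOf_eq_some_le {ι X : Type*} [Finite ι] (F : ι → Option X) :
    {x | ∃ i, F i = some x}.ncard ≤ Nat.card ι :=
  calc {x | ∃ i, F i = some x}.ncard = (some '' {x | ∃ i, F i = some x}).ncard :=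
        (Set.ncard_image_of_injective _ (Option.some_injective X)).symm
    _ ≤ (Set.range F).ncard :=
        Set.ncard_le_ncard (by rintro _ ⟨x, ⟨i, hi⟩, rfl⟩; exact ⟨i, hi⟩) (Set.finite_range F)
    _ ≤ Nat.card ι := by
        rw [← Set.image_univ, ← Set.ncard_univ]
        exact Set.ncard_image_le

namespace SimpleGraph

variable {V W : Type*} {G : SimpleGraph V} {H : SimpleGraph W}

lemma IsTree.sum_sup_edge [Finite V] [Finite W] (hG : G.IsTree) (hH : H.IsTree) (v : V) (w : W) :
    (G.sum H ⊔ edge (.inl v) (.inr w)).IsTree := by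
  rw [isTree_iff_connected_and_card] at hG hH ⊢
  refine ⟨hG.1.sum_sup_edge hH.1, ?_⟩
  have hnew : s(Sum.inl v, Sum.inr w) ∉ (G.sum H).edgeSet :=
    not_adj_sum_inl_inr (G := G) (H := H) v w
  rw [edgeSet_sup, edgeSet_edge_of_ne Sum.inl_ne_inr, Nat.card_coe_set_eq,
    Set.ncard_union_eq (Set.disjoint_singleton_right.mpr hnew), Set.ncard_singleton,
    ← Nat.card_coe_set_eq, Nat.card_congr edgeSetSumEquiv, Nat.card_sum, Nat.card_sum]
  omega

lemma Connected.induce_image {G' : SimpleGraph W} (f : G →g G') {s : Set V}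
    (h : (G.induce s).Connected) : (G'.induce (f '' s)).Connected := by
  refine h.map (induceHom f (Set.mapsTo_image f s)) ?_
  rintro ⟨_, x, hx, rfl⟩
  exact ⟨⟨x, hx⟩, rfl⟩

lemma induce_singleton_connected (v : V) : (G.induce {v}).Connected := by
  rw [induce_singleton_eq_top]
  exact Connected.of_subsingleton

lemma Connected.induce_insert_image {G' : SimpleGraph W} (f : G →g G') {s : Set V} {v : V}
    {w : W} (h : (G.induce s).Connected) (hv : v ∈ s) (hadj : G'.Adj (f v) w) :
    (G'.induce (insert w (f '' s))).Connected := by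
  rw [← Set.union_singleton]
  exact connected_induce_union (h.induce_image f).preconnected
    (induce_singleton_connected w).preconnected (Set.mem_image_of_mem f hv) rfl hadj

lemma induce_connected_of_forall_connected_subset {s : Set V} {u : V} (hu : u ∈ s)
    (h : ∀ v ∈ s, ∃ s' ⊆ s, u ∈ s' ∧ v ∈ s' ∧ (G.induce s').Connected) :
    (G.induce s).Connected :=
  induce_connected_of_patches u hu fun hv => by
    obtain ⟨s', hs', hu', hv', hconn⟩ := h _ hv
    exact ⟨s', hs', hu', hv', hconn.preconnected _ _⟩

variable {T₁ T₂ : Type*}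

/-- Two rooted trees hung below a new root `.inl (.inr ())`. -/
def rootedJoin (G₁ : SimpleGraph T₁) (r₁ : T₁) (G₂ : SimpleGraph T₂) (r₂ : T₂) :
    SimpleGraph ((T₁ ⊕ Unit) ⊕ T₂) :=
  (G₁.sum ⊥ ⊔ edge (.inl r₁) (.inr ())).sum G₂ ⊔ edge (.inl (.inr ())) (.inr r₂)

namespace rootedJoin

variable (G₁ : SimpleGraph T₁) (r₁ : T₁) (G₂ : SimpleGraph T₂) (r₂ : T₂)

lemma isTree [Finite T₁] [Finite T₂] (h₁ : G₁.IsTree) (h₂ : G₂.IsTree) :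
    (rootedJoin G₁ r₁ G₂ r₂).IsTree :=
  ((h₁.sum_sup_edge .of_subsingleton r₁ ()).sum_sup_edge h₂ _ r₂)

def inlHom : G₁ →g rootedJoin G₁ r₁ G₂ r₂ where
  toFun t := .inl (.inl t)
  map_rel' h := Or.inl (Or.inl h)

def inrHom : G₂ →g rootedJoin G₁ r₁ G₂ r₂ where
  toFun t := .inr t
  map_rel' h := Or.inl h

@[simp] lemma inlHom_apply (t : T₁) : inlHom G₁ r₁ G₂ r₂ t = .inl (.inl t) := rfl

@[simp] lemma inrHom_apply (t : T₂) : inrHom G₁ r₁ G₂ r₂ t = .inr t := rfl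

lemma adj_inl_root : (rootedJoin G₁ r₁ G₂ r₂).Adj (.inl (.inl r₁)) (.inl (.inr ())) :=
  Or.inl (Or.inr (by simp [edge_adj]))

lemma adj_inr_root : (rootedJoin G₁ r₁ G₂ r₂).Adj (.inr r₂) (.inl (.inr ())) :=
  Or.inr (by simp [edge_adj])

end rootedJoin

end SimpleGraph

lemma Quot.eq_of_mk_eq_of_isolated {α : Type*} {r : α → α → Prop} {x y : α}
    (hx : ∀ z, ¬r x z ∧ ¬r z x) (h : Quot.mk r y = Quot.mk r x) : y = x := by
  suffices ∀ a b, Relation.EqvGen r a b → (a = x ↔ b = x) from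
    (this _ _ (Quot.eqvGen_exact h)).mpr rfl
  intro a b hab
  induction hab with
  | rel a b hr =>
    constructor <;> rintro rfl
    exacts [((hx b).1 hr).elim, ((hx a).2 hr).elim]
  | refl => rfl
  | symm _ _ _ ih => exact ih.symm
  | trans _ _ _ _ _ ih₁ ih₂ => exact ih₁.trans ih₂

section LabelGlue

variable {κ A B : Type*} (F₁ : κ → Option A) (F₂ : κ → Option B)

def labelRel : A ⊕ B → A ⊕ B → Prop :=
  fun x y => ∃ i a b, F₁ i = some a ∧ F₂ i = some b ∧ x = .inl a ∧ y = .inr b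

def gluedLabel (i : κ) : Option (Quot (labelRel F₁ F₂)) :=
  match F₁ i with
  | some a => some (Quot.mk _ (.inl a))
  | none => (F₂ i).map fun b => Quot.mk _ (.inr b)

variable {F₁ F₂} {i : κ}

lemma gluedLabel_of_left {a : A} (h : F₁ i = some a) :
    gluedLabel F₁ F₂ i = some (Quot.mk _ (.inl a)) := by
  simp [gluedLabel, h]

lemma gluedLabel_of_right {b : B} (h : F₂ i = some b) :
    gluedLabel F₁ F₂ i = some (Quot.mk _ (.inr b)) := by
  cases h₁ : F₁ i with
  | none => simp [gluedLabel, h₁, h]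
  | some a => simpa [gluedLabel, h₁] using Quot.sound ⟨i, a, b, h₁, h, rfl, rfl⟩

lemma gluedLabel_eq_some {c : Quot (labelRel F₁ F₂)} (h : gluedLabel F₁ F₂ i = some c) :
    (∃ a, F₁ i = some a ∧ c = Quot.mk _ (.inl a)) ∨
      ∃ b, F₂ i = some b ∧ c = Quot.mk _ (.inr b) := by
  unfold gluedLabel at h
  cases h₁ : F₁ i with
  | some a => simp_all
  | none =>
    obtain ⟨b, hb, rfl⟩ := Option.map_eq_some_iff.mp (h₁ ▸ h)
    exact .inr ⟨b, hb, rfl⟩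

lemma isSome_gluedLabel : (gluedLabel F₁ F₂ i).isSome ↔ (F₁ i).isSome ∨ (F₂ i).isSome := by
  unfold gluedLabel
  cases F₁ i <;> simp

lemma eq_inl_of_mk_eq {a : A} (ha : ∀ i, F₁ i ≠ some a) {x : A ⊕ B}
    (h : Quot.mk (labelRel F₁ F₂) x = Quot.mk _ (.inl a)) : x = .inl a :=
  Quot.eq_of_mk_eq_of_isolated (fun _ => ⟨fun ⟨i, _, _, hi, _, hx, _⟩ =>
    ha i (Sum.inl_injective hx ▸ hi), fun ⟨_, _, _, _, _, _, hx⟩ => Sum.inl_ne_inr hx⟩) h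

lemma eq_inr_of_mk_eq {b : B} (hb : ∀ i, F₂ i ≠ some b) {x : A ⊕ B}
    (h : Quot.mk (labelRel F₁ F₂) x = Quot.mk _ (.inr b)) : x = .inr b :=
  Quot.eq_of_mk_eq_of_isolated (fun _ => ⟨fun ⟨_, _, _, _, _, hx, _⟩ => Sum.inr_ne_inl hx,
    fun ⟨i, _, _, _, hi, _, hx⟩ => hb i (Sum.inr_injective hx ▸ hi)⟩) h

lemma exists_gluedLabel_inl_iff {a : A} :
    (∃ i, gluedLabel F₁ F₂ i = some (Quot.mk _ (.inl a))) ↔ ∃ i, F₁ i = some a := by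
  refine ⟨fun ⟨i, hi⟩ => ?_, fun ⟨i, hi⟩ => ⟨i, gluedLabel_of_left hi⟩⟩
  by_contra ha
  push Not at ha
  rcases gluedLabel_eq_some hi with ⟨a', ha', h⟩ | ⟨b, -, h⟩
  · exact ha i (Sum.inl_injective (eq_inl_of_mk_eq ha h.symm) ▸ ha')
  · exact Sum.inr_ne_inl (eq_inl_of_mk_eq ha h.symm)

lemma exists_gluedLabel_inr_iff {b : B} :
    (∃ i, gluedLabel F₁ F₂ i = some (Quot.mk _ (.inr b))) ↔ ∃ i, F₂ i = some b := by
  refine ⟨fun ⟨i, hi⟩ => ?_, fun ⟨i, hi⟩ => ⟨i, gluedLabel_of_right hi⟩⟩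
  by_contra hb
  push Not at hb
  rcases gluedLabel_eq_some hi with ⟨a, -, h⟩ | ⟨b', hb', h⟩
  · exact Sum.inl_ne_inr (eq_inr_of_mk_eq hb h.symm)
  · exact hb i (Sum.inr_injective (eq_inr_of_mk_eq hb h.symm) ▸ hb')

end LabelGlue

namespace KLI

variable {k : ℕ}

def labeledR (L : KLI k) : Set L.I.R := {v | ∃ i, L.r i = some v}

def labeledB (L : KLI k) : Set L.I.B := {e | ∃ j, L.b j = some e}

lemma ncard_labeledB_le (L : KLI k) : L.labeledB.ncard ≤ k :=
  (ncard_setOf_eq_some_le L.b).trans (Nat.card_fin k).le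

variable (L₁ L₂ : KLI k)

lemma glue_r : (L₁.glue L₂).r = gluedLabel L₁.r L₂.r := by
  funext i
  simp only [KLI.glue, gluedLabel]
  cases L₁.r i <;> rfl

lemma glue_b : (L₁.glue L₂).b = gluedLabel L₁.b L₂.b := by
  funext j
  simp only [KLI.glue, gluedLabel]
  cases L₁.b j <;> rfl

def inlR (v : L₁.I.R) : (L₁.glue L₂).I.R := Quot.mk _ (.inl v)

def inrR (v : L₂.I.R) : (L₁.glue L₂).I.R := Quot.mk _ (.inr v)

def inlB (e : L₁.I.B) : (L₁.glue L₂).I.B := Quot.mk _ (.inl e)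

def inrB (e : L₂.I.B) : (L₁.glue L₂).I.B := Quot.mk _ (.inr e)

variable {L₁ L₂}

@[elab_as_elim]
lemma glueR_induction {P : (L₁.glue L₂).I.R → Prop} (inl : ∀ v, P (inlR L₁ L₂ v))
    (inr : ∀ v, P (inrR L₁ L₂ v)) (w : (L₁.glue L₂).I.R) : P w :=
  Quot.ind (Sum.rec inl inr) w

@[elab_as_elim]
lemma glueB_induction {P : (L₁.glue L₂).I.B → Prop} (inl : ∀ e, P (inlB L₁ L₂ e))
    (inr : ∀ e, P (inrB L₁ L₂ e)) (C : (L₁.glue L₂).I.B) : P C :=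
  Quot.ind (Sum.rec inl inr) C

lemma isSome_glue_r (i : ℕ) :
    ((L₁.glue L₂).r i).isSome ↔ (L₁.r i).isSome ∨ (L₂.r i).isSome := by
  simp only [glue_r]
  exact isSome_gluedLabel

lemma inlR_mem_labeledR_iff {v : L₁.I.R} :
    inlR L₁ L₂ v ∈ (L₁.glue L₂).labeledR ↔ v ∈ L₁.labeledR := by
  simp only [labeledR, inlR, glue_r, Set.mem_ofPred_eq]
  exact exists_gluedLabel_inl_iff

lemma inrR_mem_labeledR_iff {v : L₂.I.R} :
    inrR L₁ L₂ v ∈ (L₁.glue L₂).labeledR ↔ v ∈ L₂.labeledR := by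
  simp only [labeledR, inrR, glue_r, Set.mem_ofPred_eq]
  exact exists_gluedLabel_inr_iff

lemma inlB_mem_labeledB_iff {e : L₁.I.B} :
    inlB L₁ L₂ e ∈ (L₁.glue L₂).labeledB ↔ e ∈ L₁.labeledB := by
  simp only [labeledB, inlB, glue_b, Set.mem_ofPred_eq]
  exact exists_gluedLabel_inl_iff

lemma inrB_mem_labeledB_iff {e : L₂.I.B} :
    inrB L₁ L₂ e ∈ (L₁.glue L₂).labeledB ↔ e ∈ L₂.labeledB := by
  simp only [labeledB, inrB, glue_b, Set.mem_ofPred_eq]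
  exact exists_gluedLabel_inr_iff

lemma E_inl {e : L₁.I.B} {v : L₁.I.R} (h : L₁.I.E e v) :
    (L₁.glue L₂).I.E (inlB L₁ L₂ e) (inlR L₁ L₂ v) :=
  .inl ⟨e, v, h, rfl, rfl⟩

lemma E_inr {e : L₂.I.B} {v : L₂.I.R} (h : L₂.I.E e v) :
    (L₁.glue L₂).I.E (inrB L₁ L₂ e) (inrR L₁ L₂ v) :=
  .inr ⟨e, v, h, rfl, rfl⟩

lemma exists_E_of_E_inlB {e : L₁.I.B} (he : e ∉ L₁.labeledB) {w : (L₁.glue L₂).I.R}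
    (h : (L₁.glue L₂).I.E (inlB L₁ L₂ e) w) : ∃ v, L₁.I.E e v ∧ w = inlR L₁ L₂ v := by
  have he' : ∀ j, L₁.b j ≠ some e := not_exists.mp he
  rcases h with ⟨e', v, hE, hC, rfl⟩ | ⟨e', v, -, hC, -⟩
  · obtain rfl := Sum.inl_injective (eq_inl_of_mk_eq he' hC.symm)
    exact ⟨v, hE, rfl⟩
  · exact (Sum.inr_ne_inl (eq_inl_of_mk_eq he' hC.symm)).elim

lemma exists_E_of_E_inrB {e : L₂.I.B} (he : e ∉ L₂.labeledB) {w : (L₁.glue L₂).I.R}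
    (h : (L₁.glue L₂).I.E (inrB L₁ L₂ e) w) : ∃ v, L₂.I.E e v ∧ w = inrR L₁ L₂ v := by
  have he' : ∀ j, L₂.b j ≠ some e := not_exists.mp he
  rcases h with ⟨e', v, -, hC, -⟩ | ⟨e', v, hE, hC, rfl⟩
  · exact (Sum.inl_ne_inr (eq_inr_of_mk_eq he' hC.symm)).elim
  · obtain rfl := Sum.inr_injective (eq_inr_of_mk_eq he' hC.symm)
    exact ⟨v, hE, rfl⟩

lemma exists_E_of_E_inlR {v : L₁.I.R} (hv : v ∉ L₁.labeledR) {C : (L₁.glue L₂).I.B}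
    (h : (L₁.glue L₂).I.E C (inlR L₁ L₂ v)) : ∃ e, L₁.I.E e v ∧ C = inlB L₁ L₂ e := by
  have hv' : ∀ i, L₁.r i ≠ some v := not_exists.mp hv
  rcases h with ⟨e, v', hE, rfl, hw⟩ | ⟨e, v', -, -, hw⟩
  · obtain rfl := Sum.inl_injective (eq_inl_of_mk_eq hv' hw.symm)
    exact ⟨e, hE, rfl⟩
  · exact (Sum.inr_ne_inl (eq_inl_of_mk_eq hv' hw.symm)).elim

lemma exists_E_of_E_inrR {v : L₂.I.R} (hv : v ∉ L₂.labeledR) {C : (L₁.glue L₂).I.B}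
    (h : (L₁.glue L₂).I.E C (inrR L₁ L₂ v)) : ∃ e, L₂.I.E e v ∧ C = inrB L₁ L₂ e := by
  have hv' : ∀ i, L₂.r i ≠ some v := not_exists.mp hv
  rcases h with ⟨e, v', -, -, hw⟩ | ⟨e, v', hE, rfl, hw⟩
  · exact (Sum.inl_ne_inr (eq_inr_of_mk_eq hv' hw.symm)).elim
  · obtain rfl := Sum.inr_injective (eq_inr_of_mk_eq hv' hw.symm)
    exact ⟨e, hE, rfl⟩

lemma labeledR_removeR_subset (L : KLI k) (X : Finset ℕ) :
    (L.removeR X).labeledR ⊆ L.labeledR := by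
  rintro v ⟨i, hi⟩
  by_cases hX : i ∈ X <;> simp only [KLI.removeR, hX, if_true, if_false, reduceCtorEq] at hi
  exact ⟨i, hi⟩

lemma labeledB_removeB_subset (L : KLI k) (X : Finset (Fin k)) :
    (L.removeB X).labeledB ⊆ L.labeledB := by
  rintro e ⟨j, hj⟩
  by_cases hX : j ∈ X <;> simp only [KLI.removeB, hX, if_true, if_false, reduceCtorEq] at hj
  exact ⟨j, hj⟩

lemma mem_labeledB_guardKLI (f : GuardF k) (e : (guardKLI f).I.B) : e ∈ (guardKLI f).labeledB :=
  ⟨e.1, by simp [guardKLI, e.2]; rfl⟩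

end KLI

open SimpleGraph

/-- The bag that precise coverage assigns to a cover. -/
def IncGraph.bagOf (I : IncGraph) (C : Set I.B) : Set I.R := ⋃ e ∈ C, I.nbhd e

lemma IncGraph.mem_bagOf {I : IncGraph} {C : Set I.B} {v : I.R} :
    v ∈ I.bagOf C ↔ ∃ e ∈ C, I.E e v := by
  simp [IncGraph.bagOf, IncGraph.nbhd]

/-- An entangled hypertree decomposition of width at most `k`, given by its covers, with a root
whose cover contains `B` and whose bag contains `R`. -/
structure RootedDec (k : ℕ) (I : IncGraph) (R : Set I.R) (B : Set I.B) where
  T : Type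
  [finite : Finite T]
  tree : SimpleGraph T
  isTree : tree.IsTree
  root : T
  Cover : T → Set I.B
  exists_mem_cover : ∀ e, ∃ t, e ∈ Cover t
  connB : ∀ e, (tree.induce {t | e ∈ Cover t}).Connected
  connR : ∀ v, (tree.induce {t | v ∈ I.bagOf (Cover t)}).Connected
  width_le : ∀ t, (Cover t).ncard ≤ k
  subset_cover_root : B ⊆ Cover root
  subset_bag_root : R ⊆ I.bagOf (Cover root)

attribute [instance] RootedDec.finite

namespace RootedDec

variable {k : ℕ} {I : IncGraph} {R : Set I.R} {B : Set I.B}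

def toEHD (D : RootedDec k I R B) : EHD I where
  T := D.T
  tr := D.tree
  isTree := D.isTree
  Bag t := I.bagOf (D.Cover t)
  Cover := D.Cover
  complete e := by
    obtain ⟨t, ht⟩ := D.exists_mem_cover e
    exact ⟨t, Set.subset_biUnion_of_mem ht, ht⟩
  connR := D.connR
  covering _ := subset_rfl
  precise _ := rfl
  connB := D.connB

theorem mem_IEHW (D : RootedDec k I R B) : I ∈ IEHW k :=
  ⟨D.toEHD, D.width_le⟩

def mono (D : RootedDec k I R B) {R' : Set I.R} {B' : Set I.B} (hR : R' ⊆ R) (hB : B' ⊆ B) :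
    RootedDec k I R' B' :=
  { D with
    subset_cover_root := hB.trans D.subset_cover_root
    subset_bag_root := hR.trans D.subset_bag_root }

def single (R : Set I.R) (hB : ∀ e, e ∈ B) (hk : B.ncard ≤ k) : RootedDec k I R B where
  T := Unit
  tree := ⊥
  isTree := .of_subsingleton
  root := ()
  Cover _ := B
  exists_mem_cover e := ⟨(), hB e⟩
  connB e := by
    have : Nonempty {t : Unit | e ∈ B} := ⟨⟨(), hB e⟩⟩
    exact .of_subsingleton
  connR v := by
    obtain ⟨e, he⟩ := I.covered v
    have : Nonempty {t : Unit | v ∈ I.bagOf B} := ⟨⟨(), IncGraph.mem_bagOf.mpr ⟨e, hB e, he⟩⟩⟩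
    exact .of_subsingleton
  width_le _ := hk
  subset_cover_root := subset_rfl
  subset_bag_root v _ := by
    obtain ⟨e, he⟩ := I.covered v
    exact IncGraph.mem_bagOf.mpr ⟨e, hB e, he⟩

open KLI

section Glue

variable {L₁ L₂ : KLI k} (D₁ : RootedDec k L₁.I L₁.labeledR L₁.labeledB)
  (D₂ : RootedDec k L₂.I L₂.labeledR L₂.labeledB)

def glueCover : (D₁.T ⊕ Unit) ⊕ D₂.T → Set (L₁.glue L₂).I.B
  | .inl (.inl t) => inlB L₁ L₂ '' D₁.Cover t
  | .inl (.inr ()) => (L₁.glue L₂).labeledB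
  | .inr t => inrB L₁ L₂ '' D₂.Cover t

abbrev glueTree : SimpleGraph ((D₁.T ⊕ Unit) ⊕ D₂.T) :=
  rootedJoin D₁.tree D₁.root D₂.tree D₂.root

abbrev glueInl : D₁.tree →g glueTree D₁ D₂ := rootedJoin.inlHom ..

abbrev glueInr : D₂.tree →g glueTree D₁ D₂ := rootedJoin.inrHom ..

local notation "Bag" t => IncGraph.bagOf _ (glueCover D₁ D₂ t)
local notation "ρ" => (Sum.inl (Sum.inr ()) : (D₁.T ⊕ Unit) ⊕ D₂.T)

variable {D₁ D₂}

lemma inlR_mem_bag {t : D₁.T} {v : L₁.I.R} (h : v ∈ L₁.I.bagOf (D₁.Cover t)) :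
    inlR L₁ L₂ v ∈ Bag (.inl (.inl t)) := by
  obtain ⟨e, he, hE⟩ := IncGraph.mem_bagOf.mp h
  exact IncGraph.mem_bagOf.mpr ⟨_, Set.mem_image_of_mem _ he, E_inl hE⟩

lemma inrR_mem_bag {t : D₂.T} {v : L₂.I.R} (h : v ∈ L₂.I.bagOf (D₂.Cover t)) :
    inrR L₁ L₂ v ∈ Bag (.inr t) := by
  obtain ⟨e, he, hE⟩ := IncGraph.mem_bagOf.mp h
  exact IncGraph.mem_bagOf.mpr ⟨_, Set.mem_image_of_mem _ he, E_inr hE⟩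

lemma mem_bag_inl {t : D₁.T} {w : (L₁.glue L₂).I.R} (h : w ∈ Bag (.inl (.inl t))) :
    (w ∈ Bag ρ) ∨ ∃ v ∈ L₁.I.bagOf (D₁.Cover t), w = inlR L₁ L₂ v := by
  obtain ⟨_, ⟨e, he, rfl⟩, hE⟩ := IncGraph.mem_bagOf.mp h
  by_cases hlab : e ∈ L₁.labeledB
  · exact .inl (IncGraph.mem_bagOf.mpr ⟨_, inlB_mem_labeledB_iff.mpr hlab, hE⟩)
  · obtain ⟨v, hv, rfl⟩ := exists_E_of_E_inlB hlab hE
    exact .inr ⟨v, IncGraph.mem_bagOf.mpr ⟨e, he, hv⟩, rfl⟩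

lemma mem_bag_inr {t : D₂.T} {w : (L₁.glue L₂).I.R} (h : w ∈ Bag (.inr t)) :
    (w ∈ Bag ρ) ∨ ∃ v ∈ L₂.I.bagOf (D₂.Cover t), w = inrR L₁ L₂ v := by
  obtain ⟨_, ⟨e, he, rfl⟩, hE⟩ := IncGraph.mem_bagOf.mp h
  by_cases hlab : e ∈ L₂.labeledB
  · exact .inl (IncGraph.mem_bagOf.mpr ⟨_, inrB_mem_labeledB_iff.mpr hlab, hE⟩)
  · obtain ⟨v, hv, rfl⟩ := exists_E_of_E_inrB hlab hE
    exact .inr ⟨v, IncGraph.mem_bagOf.mpr ⟨e, he, hv⟩, rfl⟩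

lemma mem_bag_root_of_inlR {v : L₁.I.R} (h : inlR L₁ L₂ v ∈ Bag ρ) :
    v ∈ L₁.I.bagOf (D₁.Cover D₁.root) := by
  by_cases hv : v ∈ L₁.labeledR
  · exact D₁.subset_bag_root hv
  obtain ⟨_, hC, hE⟩ := IncGraph.mem_bagOf.mp h
  obtain ⟨e, he, rfl⟩ := exists_E_of_E_inlR hv hE
  exact IncGraph.mem_bagOf.mpr ⟨e, D₁.subset_cover_root (inlB_mem_labeledB_iff.mp hC), he⟩

lemma mem_bag_root_of_inrR {v : L₂.I.R} (h : inrR L₁ L₂ v ∈ Bag ρ) :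
    v ∈ L₂.I.bagOf (D₂.Cover D₂.root) := by
  by_cases hv : v ∈ L₂.labeledR
  · exact D₂.subset_bag_root hv
  obtain ⟨_, hC, hE⟩ := IncGraph.mem_bagOf.mp h
  obtain ⟨e, he, rfl⟩ := exists_E_of_E_inrR hv hE
  exact IncGraph.mem_bagOf.mpr ⟨e, D₂.subset_cover_root (inrB_mem_labeledB_iff.mp hC), he⟩

lemma connB_glueCover_of_mem_root {C : (L₁.glue L₂).I.B} (hC : C ∈ glueCover D₁ D₂ ρ) :
    ((glueTree D₁ D₂).induce {t | C ∈ glueCover D₁ D₂ t}).Connected := by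
  refine induce_connected_of_forall_connected_subset (u := ρ) hC ?_
  rintro ((t | ⟨⟩) | t) ht
  · obtain ⟨e, he, rfl⟩ := ht
    exact ⟨insert ρ (glueInl D₁ D₂ '' {s | e ∈ D₁.Cover s}),
      Set.insert_subset_iff.mpr
        ⟨hC, Set.image_subset_iff.mpr fun _ hs => Set.mem_image_of_mem _ hs⟩,
      Set.mem_insert _ _, Set.mem_insert_of_mem _ (Set.mem_image_of_mem _ he),
      (D₁.connB e).induce_insert_image _ (D₁.subset_cover_root (inlB_mem_labeledB_iff.mp hC))
        (rootedJoin.adj_inl_root ..)⟩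
  · exact ⟨{ρ}, Set.singleton_subset_iff.mpr ht, rfl, rfl, induce_singleton_connected _⟩
  · obtain ⟨e, he, rfl⟩ := ht
    exact ⟨insert ρ (glueInr D₁ D₂ '' {s | e ∈ D₂.Cover s}),
      Set.insert_subset_iff.mpr
        ⟨hC, Set.image_subset_iff.mpr fun _ hs => Set.mem_image_of_mem _ hs⟩,
      Set.mem_insert _ _, Set.mem_insert_of_mem _ (Set.mem_image_of_mem _ he),
      (D₂.connB e).induce_insert_image _ (D₂.subset_cover_root (inrB_mem_labeledB_iff.mp hC))
        (rootedJoin.adj_inr_root ..)⟩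

/- An unlabelled node was not merged with anything, so it lives on one side only, where its
occurrences are connected already. -/
lemma connB_glueCover_of_not_mem_root {C : (L₁.glue L₂).I.B} (hC : C ∉ glueCover D₁ D₂ ρ) :
    ((glueTree D₁ D₂).induce {t | C ∈ glueCover D₁ D₂ t}).Connected := by
  induction C using glueB_induction with
  | inl e =>
    have he : ∀ j, L₁.b j ≠ some e := not_exists.mp (mt inlB_mem_labeledB_iff.mpr hC)
    have hS : {t | inlB L₁ L₂ e ∈ glueCover D₁ D₂ t} =
        glueInl D₁ D₂ '' {s | e ∈ D₁.Cover s} := by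
      ext ((t | ⟨⟩) | t) <;> simp only [glueCover, Set.mem_image, Set.mem_ofPred_eq,
        rootedJoin.inlHom_apply, reduceCtorEq, and_false, exists_false, iff_false, Sum.inl.injEq,
        exists_eq_right]
      · exact ⟨fun ⟨e', he', h⟩ => Sum.inl_injective (eq_inl_of_mk_eq he h) ▸ he',
          fun h => ⟨e, h, rfl⟩⟩
      · exact hC
      · exact fun ⟨e', _, h⟩ => Sum.inr_ne_inl (eq_inl_of_mk_eq he h)
    rw [hS]
    exact (D₁.connB e).induce_image _
  | inr e =>
    have he : ∀ j, L₂.b j ≠ some e := not_exists.mp (mt inrB_mem_labeledB_iff.mpr hC)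
    have hS : {t | inrB L₁ L₂ e ∈ glueCover D₁ D₂ t} =
        glueInr D₁ D₂ '' {s | e ∈ D₂.Cover s} := by
      ext ((t | ⟨⟩) | t) <;> simp only [glueCover, Set.mem_image, Set.mem_ofPred_eq,
        rootedJoin.inrHom_apply, reduceCtorEq, and_false, exists_false, iff_false, Sum.inr.injEq,
        exists_eq_right]
      · exact fun ⟨e', _, h⟩ => Sum.inl_ne_inr (eq_inr_of_mk_eq he h)
      · exact hC
      · exact ⟨fun ⟨e', he', h⟩ => Sum.inr_injective (eq_inr_of_mk_eq he h) ▸ he',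
          fun h => ⟨e, h, rfl⟩⟩
    rw [hS]
    exact (D₂.connB e).induce_image _

lemma connB_glueCover (C : (L₁.glue L₂).I.B) :
    ((glueTree D₁ D₂).induce {t | C ∈ glueCover D₁ D₂ t}).Connected := by
  by_cases hC : C ∈ glueCover D₁ D₂ ρ
  · exact connB_glueCover_of_mem_root hC
  · exact connB_glueCover_of_not_mem_root hC

lemma connR_glueCover_of_mem_root {w : (L₁.glue L₂).I.R} (hw : w ∈ Bag ρ) :
    ((glueTree D₁ D₂).induce {t | w ∈ Bag t}).Connected := by
  have mem_of_mem_cover {C t} (hC : C ∈ glueCover D₁ D₂ t) (hE : (L₁.glue L₂).I.E C w) :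
      w ∈ Bag t :=
    IncGraph.mem_bagOf.mpr ⟨C, hC, hE⟩
  refine induce_connected_of_forall_connected_subset (u := ρ) hw ?_
  rintro ((t | ⟨⟩) | t) ht
  · obtain ⟨_, ⟨e, he, rfl⟩, hE⟩ := IncGraph.mem_bagOf.mp ht
    by_cases hlab : e ∈ L₁.labeledB
    · exact ⟨_, fun _ hC => mem_of_mem_cover hC hE, inlB_mem_labeledB_iff.mpr hlab,
        Set.mem_image_of_mem _ he, connB_glueCover _⟩
    obtain ⟨v, hv, rfl⟩ := exists_E_of_E_inlB hlab hE
    refine ⟨insert ρ (glueInl D₁ D₂ '' {s | v ∈ L₁.I.bagOf (D₁.Cover s)}),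
      Set.insert_subset_iff.mpr ⟨hw, Set.image_subset_iff.mpr fun _ => inlR_mem_bag⟩,
      Set.mem_insert _ _,
      Set.mem_insert_of_mem _ (Set.mem_image_of_mem _ (IncGraph.mem_bagOf.mpr ⟨e, he, hv⟩)),
      (D₁.connR v).induce_insert_image _ (mem_bag_root_of_inlR hw) (rootedJoin.adj_inl_root ..)⟩
  · exact ⟨{ρ}, Set.singleton_subset_iff.mpr ht, rfl, rfl, induce_singleton_connected _⟩
  · obtain ⟨_, ⟨e, he, rfl⟩, hE⟩ := IncGraph.mem_bagOf.mp ht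
    by_cases hlab : e ∈ L₂.labeledB
    · exact ⟨_, fun _ hC => mem_of_mem_cover hC hE, inrB_mem_labeledB_iff.mpr hlab,
        Set.mem_image_of_mem _ he, connB_glueCover _⟩
    obtain ⟨v, hv, rfl⟩ := exists_E_of_E_inrB hlab hE
    refine ⟨insert ρ (glueInr D₁ D₂ '' {s | v ∈ L₂.I.bagOf (D₂.Cover s)}),
      Set.insert_subset_iff.mpr ⟨hw, Set.image_subset_iff.mpr fun _ => inrR_mem_bag⟩,
      Set.mem_insert _ _,
      Set.mem_insert_of_mem _ (Set.mem_image_of_mem _ (IncGraph.mem_bagOf.mpr ⟨e, he, hv⟩)),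
      (D₂.connR v).induce_insert_image _ (mem_bag_root_of_inrR hw) (rootedJoin.adj_inr_root ..)⟩

lemma connR_glueCover_of_not_mem_root {w : (L₁.glue L₂).I.R} (hlab : w ∉ (L₁.glue L₂).labeledR)
    (hw : w ∉ Bag ρ) : ((glueTree D₁ D₂).induce {t | w ∈ Bag t}).Connected := by
  induction w using glueR_induction with
  | inl v =>
    have hv : ∀ i, L₁.r i ≠ some v := not_exists.mp (mt inlR_mem_labeledR_iff.mpr hlab)
    have hS : {t | inlR L₁ L₂ v ∈ Bag t} =
        glueInl D₁ D₂ '' {s | v ∈ L₁.I.bagOf (D₁.Cover s)} := by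
      ext ((t | ⟨⟩) | t) <;> simp only [Set.mem_image, Set.mem_ofPred_eq,
        rootedJoin.inlHom_apply, reduceCtorEq, and_false, exists_false, iff_false, Sum.inl.injEq,
        exists_eq_right]
      · refine ⟨fun h => ?_, inlR_mem_bag⟩
        obtain h | ⟨v', hv', h⟩ := mem_bag_inl h
        exacts [(hw h).elim, Sum.inl_injective (eq_inl_of_mk_eq hv h.symm) ▸ hv']
      · exact hw
      · intro h
        obtain h | ⟨v', -, h⟩ := mem_bag_inr h
        exacts [hw h, Sum.inr_ne_inl (eq_inl_of_mk_eq hv h.symm)]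
    rw [hS]
    exact (D₁.connR v).induce_image _
  | inr v =>
    have hv : ∀ i, L₂.r i ≠ some v := not_exists.mp (mt inrR_mem_labeledR_iff.mpr hlab)
    have hS : {t | inrR L₁ L₂ v ∈ Bag t} =
        glueInr D₁ D₂ '' {s | v ∈ L₂.I.bagOf (D₂.Cover s)} := by
      ext ((t | ⟨⟩) | t) <;> simp only [Set.mem_image, Set.mem_ofPred_eq,
        rootedJoin.inrHom_apply, reduceCtorEq, and_false, exists_false, iff_false, Sum.inr.injEq,
        exists_eq_right]
      · intro h
        obtain h | ⟨v', -, h⟩ := mem_bag_inl h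
        exacts [hw h, Sum.inl_ne_inr (eq_inr_of_mk_eq hv h.symm)]
      · exact hw
      · refine ⟨fun h => ?_, inrR_mem_bag⟩
        obtain h | ⟨v', hv', h⟩ := mem_bag_inr h
        exacts [(hw h).elim, Sum.inr_injective (eq_inr_of_mk_eq hv h.symm) ▸ hv']
    rw [hS]
    exact (D₂.connR v).induce_image _

end Glue

variable {L₁ L₂ : KLI k}

def glue (D₁ : RootedDec k L₁.I L₁.labeledR L₁.labeledB)
    (D₂ : RootedDec k L₂.I L₂.labeledR L₂.labeledB)
    (h : (L₁.glue L₂).labeledR ⊆ (L₁.glue L₂).I.bagOf (L₁.glue L₂).labeledB) :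
    RootedDec k (L₁.glue L₂).I (L₁.glue L₂).labeledR (L₁.glue L₂).labeledB where
  T := (D₁.T ⊕ Unit) ⊕ D₂.T
  tree := glueTree D₁ D₂
  isTree := rootedJoin.isTree _ _ _ _ D₁.isTree D₂.isTree
  root := .inl (.inr ())
  Cover := glueCover D₁ D₂
  exists_mem_cover C := by
    induction C using glueB_induction with
    | inl e =>
      obtain ⟨t, ht⟩ := D₁.exists_mem_cover e
      exact ⟨.inl (.inl t), Set.mem_image_of_mem _ ht⟩
    | inr e =>
      obtain ⟨t, ht⟩ := D₂.exists_mem_cover e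
      exact ⟨.inr t, Set.mem_image_of_mem _ ht⟩
  connB := connB_glueCover
  connR w := by
    by_cases hw : w ∈ (L₁.glue L₂).I.bagOf (L₁.glue L₂).labeledB
    · exact connR_glueCover_of_mem_root hw
    · exact connR_glueCover_of_not_mem_root (fun hl => hw (h hl)) hw
  width_le
    | .inl (.inl t) => (Set.ncard_image_le).trans (D₁.width_le t)
    | .inl (.inr ()) => ncard_labeledB_le _
    | .inr t => (Set.ncard_image_le).trans (D₂.width_le t)
  subset_cover_root := subset_rfl
  subset_bag_root := h

end RootedDec

namespace KLI

variable {k : ℕ}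

/-- `dom r = dom g` is part of the paper's definition of a `k`-labeled incidence graph. -/
def WellGuarded (L : KLI k) : Prop :=
  L.realGuards ∧ ∀ i, (L.r i).isSome ↔ (L.g.f i).isSome

lemma WellGuarded.labeledR_subset {L : KLI k} (hL : L.WellGuarded) :
    L.labeledR ⊆ L.I.bagOf L.labeledB := by
  rintro v ⟨i, hi⟩
  obtain ⟨j, hj⟩ := Option.isSome_iff_exists.mp ((hL.2 i).mp (by simp [hi]))
  obtain ⟨v', e, hv', he, hE⟩ := hL.1 i j hj
  obtain rfl : v = v' := Option.some_injective _ (hi.symm.trans hv')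
  exact IncGraph.mem_bagOf.mpr ⟨e, ⟨j, he⟩, hE⟩

lemma WellGuarded.removeR {L : KLI k} (hL : L.WellGuarded) (X : Finset ℕ) :
    (L.removeR X).WellGuarded := by
  refine ⟨fun i j hj => ?_, fun i => ?_⟩ <;> by_cases hi : i ∈ X
  · simp [KLI.removeR, GuardF.remove, hi] at hj
  · simpa [KLI.removeR, hi] using hL.1 i j (by simpa [KLI.removeR, GuardF.remove, hi] using hj)
  · simp [KLI.removeR, GuardF.remove, hi]
  · simpa [KLI.removeR, GuardF.remove, hi] using hL.2 i

lemma WellGuarded.removeB {L : KLI k} (hL : L.WellGuarded) {X : Finset (Fin k)}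
    (hX : ∀ j ∈ X, j ∉ L.g.img) : (L.removeB X).WellGuarded := by
  refine ⟨fun i j hj => ?_, hL.2⟩
  have hjX : j ∉ X := fun h => hX j h (GuardF.mem_img.mpr ⟨i, hj⟩)
  simpa [KLI.removeB, hjX] using hL.1 i j hj

/- `h₂` is weaker than real guards of `L₂`: in a transition `L^f · (L − X_B)` the guards of
`L − X_B` may have lost their blue labels, but only at indices that `L^f` guards. -/
lemma WellGuarded.glue_of_guarded {L₁ L₂ : KLI k} (h₁ : L₁.WellGuarded)
    (h₂ : ∀ i j, L₁.g.f i = none → L₂.g.f i = some j →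
      ∃ v e, L₂.r i = some v ∧ L₂.b j = some e ∧ L₂.I.E e v)
    (hdom₂ : ∀ i, (L₂.r i).isSome ↔ (L₂.g.f i).isSome) : (L₁.glue L₂).WellGuarded := by
  refine ⟨fun i j hj => ?_, fun i => ?_⟩
  · change (L₁.g.f i).or (L₂.g.f i) = some j at hj
    cases hfi : L₁.g.f i with
    | some j' =>
      obtain rfl : j' = j := by simpa [hfi] using hj
      obtain ⟨v, e, hv, he, hE⟩ := h₁.1 i j' hfi
      refine ⟨inlR L₁ L₂ v, inlB L₁ L₂ e, ?_, ?_, E_inl hE⟩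
      · rw [glue_r]; exact gluedLabel_of_left hv
      · rw [glue_b]; exact gluedLabel_of_left he
    | none =>
      obtain ⟨v, e, hv, he, hE⟩ := h₂ i j hfi (by simpa [hfi] using hj)
      refine ⟨inrR L₁ L₂ v, inrB L₁ L₂ e, ?_, ?_, E_inr hE⟩
      · rw [glue_r]; exact gluedLabel_of_right hv
      · rw [glue_b]; exact gluedLabel_of_right he
  · change _ ↔ ((L₁.g.f i).or (L₂.g.f i)).isSome
    rw [isSome_glue_r, Option.isSome_or, h₁.2 i, hdom₂ i, Bool.or_eq_true]

lemma WellGuarded.glue {L₁ L₂ : KLI k} (h₁ : L₁.WellGuarded) (h₂ : L₂.WellGuarded) :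
    (L₁.glue L₂).WellGuarded :=
  h₁.glue_of_guarded (fun i j _ hj => h₂.1 i j hj) h₂.2

lemma wellGuarded_guardKLI (f : GuardF k) : (guardKLI f).WellGuarded := by
  refine ⟨fun i j hj => ?_, fun i => ?_⟩
  · change f.f i = some j at hj
    have hi : i ∈ f.dom := GuardF.mem_dom.mpr (by simp [hj])
    have hj' : j ∈ f.img := GuardF.mem_img.mpr ⟨i, hj⟩
    exact ⟨⟨i, hi⟩, ⟨j, hj'⟩, by simp [guardKLI, hi], by simp [guardKLI, hj'], hj⟩
  · change _ ↔ (f.f i).isSome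
    rw [← GuardF.mem_dom]
    by_cases hi : i ∈ f.dom <;> simp [guardKLI, hi]

lemma WellGuarded.applyTransition {L : KLI k} (hL : L.WellGuarded) {f : GuardF k}
    (hf : L.g.IsTransition f) : (L.applyTransition f).WellGuarded := by
  refine (wellGuarded_guardKLI f).glue_of_guarded (fun i j hfi hj => ?_) hL.2
  change f.f i = none at hfi
  have hjX : j ∉ L.g.img ∩ f.img ∩ L.domB := fun hX => by
    simpa [hfi] using hf.2.2 i j hj (Finset.mem_inter.mp (Finset.mem_inter.mp hX).1).2
  obtain ⟨v, e, hv, he, hE⟩ := hL.1 i j hj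
  exact ⟨v, e, hv, (if_neg hjX).trans he, hE⟩

end KLI

open KLI

theorem GLI.wellGuarded {k : ℕ} {L : KLI k} (h : GLI k L) : L.WellGuarded := by
  induction h with
  | base L _ _ hdom hg => exact ⟨hg, hdom⟩
  | removeR L X _ _ ih => exact ih.removeR X
  | removeB L X _ hX ih => exact ih.removeB fun j hj => (hX j hj).2
  | trans L f _ hf ih => exact ih.applyTransition hf
  | glue L L' _ _ _ ih ih' => exact ih.glue ih'

theorem GLI.nonempty_rootedDec {k : ℕ} {L : KLI k} (h : GLI k L) :
    Nonempty (RootedDec k L.I L.labeledR L.labeledB) := by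
  induction h with
  | base L _ hB _ _ => exact ⟨.single _ hB L.ncard_labeledB_le⟩
  | removeR L X _ _ ih => exact ih.map fun D => D.mono (labeledR_removeR_subset L X) subset_rfl
  | removeB L X _ _ ih => exact ih.map fun D => D.mono subset_rfl (labeledB_removeB_subset L X)
  | trans L f hL hf ih =>
    obtain ⟨D⟩ := ih
    exact ⟨.glue (.single _ (mem_labeledB_guardKLI f) (ncard_labeledB_le _))
      (D.mono subset_rfl (labeledB_removeB_subset _ _))
      (GLI.trans L f hL hf).wellGuarded.labeledR_subset⟩
  | glue L L' hL hL' hc ih ih' =>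
    obtain ⟨D⟩ := ih
    obtain ⟨D'⟩ := ih'
    exact ⟨.glue D D' (GLI.glue L L' hL hL' hc).wellGuarded.labeledR_subset⟩

/-- For every guarded `k`-labeled incidence graph `L ∈ GLI^k`,
the underlying incidence graph belongs to `IEHW_k`. -/
theorem GLI_mem_IEHW (k : ℕ) (L : KLI k) (hL : GLI k L) : L.I ∈ IEHW k := by
  obtain ⟨D⟩ := hL.nonempty_rootedDec
  exact D.mem_IEHW
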